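/- arXiv:2105.06074 — 2 statements merged into one kernel-verified Lean document; each statement's English description precedes it below -/
import Mathlib

section
/- The character polynomial of the canonical gate L(x,y,z) equals F(t) = (t²+1)(Ct² + Bt + A) − t², where A = cos(x+y−z)cos(x−y+z)cos(−x−y−z)cos(−x+y+z), B = −sin(2x)sin(2y)sin(2z), and C = sin(x+y−z)sin(x−y+z)sin(−x−y−z)sin(−x+y+z). -/
/-!
The magic basis diagonalises `x XX + y YY + z ZZ`, so `M†·L(x,y,z)·M` is the diagonal matrix of
the phases `e^{iθ_k}` and `F(t) = ∏ (cos θ_k + t sin θ_k)`. The four phases `θ_k` sum to zero;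
grouping them in two pairs with sums `±2x` turns each pair into a quadratic in `t`, and
multiplying the two quadratics gives the stated form.
-/

open Complex Matrix

/-- Kronecker product of two 2×2 matrices as a 4×4 matrix, basis order |00⟩,|01⟩,|10⟩,|11⟩. -/
def kron (A B : Matrix (Fin 2) (Fin 2) ℂ) : Matrix (Fin 4) (Fin 4) ℂ :=
  !![A 0 0 * B 0 0, A 0 0 * B 0 1, A 0 1 * B 0 0, A 0 1 * B 0 1;
     A 0 0 * B 1 0, A 0 0 * B 1 1, A 0 1 * B 1 0, A 0 1 * B 1 1;
     A 1 0 * B 0 0, A 1 0 * B 0 1, A 1 1 * B 0 0, A 1 1 * B 0 1;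
     A 1 0 * B 1 0, A 1 0 * B 1 1, A 1 1 * B 1 0, A 1 1 * B 1 1]

def σX : Matrix (Fin 2) (Fin 2) ℂ := !![0, 1; 1, 0]
def σY : Matrix (Fin 2) (Fin 2) ℂ := !![0, -I; I, 0]
def σZ : Matrix (Fin 2) (Fin 2) ℂ := !![1, 0; 0, -1]

/-- The canonical gate L(x,y,z) = exp(i(x σX⊗σX + y σY⊗σY + z σZ⊗σZ)). -/
noncomputable def Lgate (x y z : ℝ) : Matrix (Fin 4) (Fin 4) ℂ :=
  NormedSpace.exp (I • ((x : ℂ) • kron σX σX + (y : ℂ) • kron σY σY + (z : ℂ) • kron σZ σZ))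

/-- The magic basis change matrix. -/
noncomputable def magicM : Matrix (Fin 4) (Fin 4) ℂ :=
  ((1 : ℂ) / Real.sqrt 2) •
  !![1, 0, 0, I;
     0, I, 1, 0;
     0, I, -1, 0;
     1, 0, 0, -I]

/-- The character polynomial F_U(t) = det(Re(M†UM) + t·Im(M†UM)). -/
noncomputable def charPoly (U : Matrix (Fin 4) (Fin 4) ℂ) (t : ℝ) : ℝ :=
  (((magicMᴴ * U * magicM).map Complex.re) + t • ((magicMᴴ * U * magicM).map Complex.im)).det

namespace Real

lemma cos_mul_cos_sub_cos_mul_cos {a b c d : ℝ} (h : a + b + c + d = 0) :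
    cos c * cos d - cos a * cos b = sin (a + c) * sin (a + d) := by
  obtain rfl : b = -(a + (c + d)) := by linarith
  simp only [cos_neg, cos_add, sin_add]
  linear_combination (-(cos c * cos d)) * sin_sq_add_cos_sq a

lemma cos_add_mul_sin_mul_cos_add_mul_sin (a b t : ℝ) :
    (cos a + t * sin a) * (cos b + t * sin b) =
      cos a * cos b + t * sin (a + b) + t ^ 2 * (sin a * sin b) := by
  rw [sin_add]; ring

lemma prod_cos_add_mul_sin_of_add_eq_zero {a b c d : ℝ} (h : a + b + c + d = 0) (t : ℝ) :
    (cos a + t * sin a) * (cos b + t * sin b) * (cos c + t * sin c) * (cos d + t * sin d) =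
      (t ^ 2 + 1) * (sin a * sin b * sin c * sin d * t ^ 2 +
        sin (a + b) * sin (a + c) * sin (a + d) * t + cos a * cos b * cos c * cos d) - t ^ 2 := by
  have hcd : c + d = -(a + b) := by linarith
  have hcos : cos c * cos d - sin c * sin d = cos (a + b) := by rw [← cos_add, hcd, cos_neg]
  have hsin : sin (c + d) = -sin (a + b) := by rw [hcd, sin_neg]
  rw [mul_assoc _ (cos c + _), cos_add_mul_sin_mul_cos_add_mul_sin a b,
    cos_add_mul_sin_mul_cos_add_mul_sin c d, hsin]
  linear_combination (t + t ^ 3) * sin (a + b) * cos_mul_cos_sub_cos_mul_cos h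
    - t ^ 3 * sin (a + b) * (hcos + cos_add a b)
    + t ^ 2 * (cos (a + b) * cos_add a b
      + (sin a * sin b - cos a * cos b) * hcos
      - sin_sq_add_cos_sq (a + b))

end Real

lemma Matrix.mul_exp_mul_eq_exp_of_mul_eq_mul {m 𝔸 : Type*} [Fintype m] [DecidableEq m]
    [NormedRing 𝔸] [NormedAlgebra ℚ 𝔸] [CompleteSpace 𝔸] {U V H D : Matrix m m 𝔸}
    (hVU : V * U = 1) (hUV : U * V = 1) (hHD : H * U = U * D) :
    V * NormedSpace.exp H * U = NormedSpace.exp D := by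
  have hD : D = V * H * U := by rw [Matrix.mul_assoc, hHD, ← Matrix.mul_assoc, hVU, one_mul]
  rw [hD]
  exact (Matrix.exp_units_conj' ⟨U, V, hUV, hVU⟩ H).symm

lemma Matrix.det_map_re_add_smul_map_im_diagonal_exp {n : Type*} [Fintype n] [DecidableEq n]
    (θ : n → ℝ) (t : ℝ) :
    ((diagonal fun k => Complex.exp (θ k * I)).map Complex.re +
        t • (diagonal fun k => Complex.exp (θ k * I)).map Complex.im).det =
      ∏ k, (Real.cos (θ k) + t * Real.sin (θ k)) := by
  rw [diagonal_map Complex.zero_re, diagonal_map Complex.zero_im, ← diagonal_smul,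
    diagonal_add, det_diagonal]
  simp only [Pi.smul_apply, Complex.exp_ofReal_mul_I_re, Complex.exp_ofReal_mul_I_im, smul_eq_mul]

lemma magicM_conjTranspose_mul_self : magicMᴴ * magicM = 1 := by
  have h2 : ((Real.sqrt 2 : ℝ) : ℂ) ^ 2 = 2 := by
    rw [← Complex.ofReal_pow, Real.sq_sqrt zero_le_two]; norm_num
  ext i j
  fin_cases i <;> fin_cases j <;>
    simp [magicM, Matrix.mul_apply, Fin.sum_univ_four] <;>
    field_simp <;> simp only [h2, Complex.I_sq] <;> ring

/-- The eigenvalues of `x XX + y YY + z ZZ` on the four magic basis vectors. -/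
def LgatePhases (x y z : ℝ) : Fin 4 → ℝ := ![x - y + z, x + y - z, -x - y - z, -x + y + z]

lemma hamiltonian_mul_magicM (x y z : ℝ) :
    (I • ((x : ℂ) • kron σX σX + (y : ℂ) • kron σY σY + (z : ℂ) • kron σZ σZ)) * magicM =
      magicM * diagonal fun k => (LgatePhases x y z k : ℂ) * I := by
  ext i j
  fin_cases i <;> fin_cases j <;>
    simp [kron, σX, σY, σZ, magicM, LgatePhases, Matrix.mul_apply, Fin.sum_univ_four,
      Matrix.diagonal] <;> ring

lemma magicM_conjTranspose_mul_Lgate_mul_magicM (x y z : ℝ) :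
    magicMᴴ * Lgate x y z * magicM =
      diagonal fun k => Complex.exp (LgatePhases x y z k * I) := by
  rw [Lgate, Matrix.mul_exp_mul_eq_exp_of_mul_eq_mul magicM_conjTranspose_mul_self
    (mul_eq_one_comm.mp magicM_conjTranspose_mul_self) (hamiltonian_mul_magicM x y z),
    exp_diagonal]
  congr 1
  funext k
  rw [Pi.coe_exp, Complex.exp_eq_exp_ℂ]

theorem charPoly_of_Lgate (x y z : ℝ) (t : ℝ) :
    charPoly (Lgate x y z) t =
      (t ^ 2 + 1) *
          ((Real.sin (x + y - z) * Real.sin (x - y + z) * Real.sin (-x - y - z) *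
                Real.sin (-x + y + z)) * t ^ 2 +
            (-(Real.sin (2 * x) * Real.sin (2 * y) * Real.sin (2 * z))) * t +
            Real.cos (x + y - z) * Real.cos (x - y + z) * Real.cos (-x - y - z) *
              Real.cos (-x + y + z)) -
        t ^ 2 := by
  rw [charPoly, magicM_conjTranspose_mul_Lgate_mul_magicM,
    Matrix.det_map_re_add_smul_map_im_diagonal_exp, Fin.prod_univ_four]
  have h := Real.prod_cos_add_mul_sin_of_add_eq_zero
    (a := x - y + z) (b := x + y - z) (c := -x - y - z) (d := -x + y + z) (by ring) t
  rw [show x - y + z + (x + y - z) = 2 * x by ring,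
    show x - y + z + (-x - y - z) = -(2 * y) by ring,
    show x - y + z + (-x + y + z) = 2 * z by ring, Real.sin_neg] at h
  simp only [LgatePhases, Matrix.cons_val_zero, Matrix.cons_val_one, Matrix.cons_val_two,
    Matrix.cons_val_three, Matrix.head_cons, Matrix.tail_cons]
  linear_combination h
end

section
/- Let U₁, U₂ be two-qubit diagonal unitaries conjugated by local unitaries of CPHASE form, i.e., Uⱼ = diag(1, 1, 1, e^{iφⱼ}) up to local equivalence. Then for any A₁, A₂ ∈ SU(2), the gate V = U₁(A₁⊗A₂)U₂ has character polynomial coefficient B = 0, i.e., if η(V) = (x',y',z') with π/4 ≥ x' ≥ y' ≥ |z'|, then z' = 0. -/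
open Complex Matrix

/-- A 2×2 matrix is in SU(2). -/
def SU2 (A : Matrix (Fin 2) (Fin 2) ℂ) : Prop := Aᴴ * A = 1 ∧ A.det = 1

/-- The CPHASE gate diag(1,1,1,e^{iφ}). -/
noncomputable def CPHASE (φ : ℝ) : Matrix (Fin 4) (Fin 4) ℂ :=
  Matrix.diagonal ![1, 1, 1, Complex.exp (I * φ)]

/-! In the magic basis every local gate `kron A B` becomes a real orthogonal matrix, so
`tr (gᵀ g)` (with `g` the gate in the magic basis) is a local invariant. For `L(x,y,z)` its
imaginary part is `Σ sin 2θₖ = 4 sin 2x sin 2y sin 2z`, the `θₖ` being the eigenphases. For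
`V = (local) · CPHASE φ₁ · (local) · CPHASE φ₂ · (local)` it is `tr (Oᵀ K₁ O K₂)` with `O` real
orthogonal and `Kⱼ = diag (e^{iφⱼ}, e^{iφⱼ}, 1, 1)`; as `det V = 1` gives `e^{iφ₂} = e^{-iφ₁}`, its
imaginary part is `sin φ₁ Σ O_{lk}² (f l - f k)` for the indicator `f` of `{0, 1}`, which
vanishes because the rows and the columns of `O ∘ O` sum to one. Hence one of `sin 2x`,
`sin 2y`, `sin 2z` is zero, which in the Weyl chamber forces `z = 0`. -/

section Kron

variable {A B C D : Matrix (Fin 2) (Fin 2) ℂ}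

lemma kron_mul_kron : kron A B * kron C D = kron (A * C) (B * D) := by
  ext i j
  fin_cases i <;> fin_cases j <;>
    simp [kron, Matrix.mul_apply, Fin.sum_univ_four, Fin.sum_univ_two] <;> ring

lemma conjTranspose_kron : (kron A B)ᴴ = kron Aᴴ Bᴴ := by
  ext i j
  fin_cases i <;> fin_cases j <;> simp [kron]

lemma kron_one : kron 1 1 = 1 := by
  ext i j
  fin_cases i <;> fin_cases j <;> simp [kron]

lemma det_kron : (kron A B).det = A.det ^ 2 * B.det ^ 2 := by
  simp [Matrix.det_succ_row_zero, Fin.sum_univ_succ, kron, Fin.succAbove]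
  ring

end Kron

namespace SU2

variable {A B : Matrix (Fin 2) (Fin 2) ℂ}

lemma mul (hA : SU2 A) (hB : SU2 B) : SU2 (A * B) := by
  refine ⟨?_, by rw [Matrix.det_mul, hA.2, hB.2, one_mul]⟩
  rw [Matrix.conjTranspose_mul, Matrix.mul_assoc, ← Matrix.mul_assoc Aᴴ, hA.1, Matrix.one_mul,
    hB.1]

lemma det_kron (hA : SU2 A) (hB : SU2 B) : (kron A B).det = 1 := by
  rw [_root_.det_kron, hA.2, hB.2]
  norm_num

lemma eq_of_apply_zero (h : SU2 A) :
    A = !![A 0 0, A 0 1; -star (A 0 1), star (A 0 0)] := by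
  have hadj : Aᴴ = A.adjugate := by
    rw [← Matrix.inv_eq_left_inv h.1, Matrix.inv_def, h.2, Ring.inverse_one, one_smul]
  have h11 := congr_fun₂ hadj 0 0
  have h10 := congr_fun₂ hadj 1 0
  simp [Matrix.adjugate_fin_two] at h11 h10
  ext i j
  fin_cases i <;> fin_cases j <;> simp [h11, h10]

end SU2

/-- The columns are `√2` times the magic basis `|00⟩+|11⟩, i(|00⟩-|11⟩), i(|01⟩+|10⟩),
|01⟩-|10⟩`; leaving out the normalisation keeps every entry in `ℤ[i]`. -/
def magic : Matrix (Fin 4) (Fin 4) ℂ :=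
  !![1, I, 0, 0; 0, 0, I, 1; 0, 0, I, -1; 1, -I, 0, 0]

lemma conjTranspose_magic_mul_magic : magicᴴ * magic = (2 : ℂ) • 1 := by
  ext i j
  fin_cases i <;> fin_cases j <;>
    simp [magic, Matrix.mul_apply, Fin.sum_univ_four, Complex.ext_iff] <;> norm_num

lemma magic_mul_conjTranspose_magic : magic * magicᴴ = (2 : ℂ) • 1 := by
  ext i j
  fin_cases i <;> fin_cases j <;>
    simp [magic, Matrix.mul_apply, Fin.sum_univ_four, Complex.ext_iff] <;> norm_num

noncomputable def magicUnit : (Matrix (Fin 4) (Fin 4) ℂ)ˣ where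
  val := magic
  inv := (1 / 2 : ℂ) • magicᴴ
  val_inv := by rw [Matrix.mul_smul, magic_mul_conjTranspose_magic, smul_smul]; norm_num
  inv_val := by rw [Matrix.smul_mul, conjTranspose_magic_mul_magic, smul_smul]; norm_num

noncomputable def toMagic (V : Matrix (Fin 4) (Fin 4) ℂ) : Matrix (Fin 4) (Fin 4) ℂ :=
  magicUnit⁻¹.val * V * magicUnit.val

lemma toMagic_eq (V : Matrix (Fin 4) (Fin 4) ℂ) :
    toMagic V = (1 / 2 : ℂ) • (magicᴴ * V * magic) := by
  rw [← Matrix.smul_mul, ← Matrix.smul_mul]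
  rfl

lemma toMagic_mul (V W : Matrix (Fin 4) (Fin 4) ℂ) :
    toMagic (V * W) = toMagic V * toMagic W := by
  simp only [toMagic, Matrix.mul_assoc, Units.mul_inv_cancel_left]

lemma toMagic_one : toMagic 1 = 1 := by
  rw [toMagic, Matrix.mul_one, Units.inv_mul]

lemma det_toMagic (V : Matrix (Fin 4) (Fin 4) ℂ) : (toMagic V).det = V.det :=
  Matrix.det_units_conj' magicUnit V

lemma conjTranspose_toMagic (V : Matrix (Fin 4) (Fin 4) ℂ) : (toMagic V)ᴴ = toMagic Vᴴ := by
  simp only [toMagic_eq, Matrix.conjTranspose_smul, Matrix.conjTranspose_mul,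
    Matrix.conjTranspose_conjTranspose, Matrix.mul_assoc]
  norm_num

lemma toMagic_exp (X : Matrix (Fin 4) (Fin 4) ℂ) :
    toMagic (NormedSpace.exp X) = NormedSpace.exp (toMagic X) :=
  (Matrix.exp_units_conj' magicUnit X).symm

lemma im_toMagic_kron {A B : Matrix (Fin 2) (Fin 2) ℂ} (hA : SU2 A) (hB : SU2 B) (i j : Fin 4) :
    (toMagic (kron A B) i j).im = 0 := by
  rw [hA.eq_of_apply_zero, hB.eq_of_apply_zero, toMagic_eq]
  fin_cases i <;> fin_cases j <;>
    simp [kron, magic, Matrix.mul_apply, Fin.sum_univ_four] <;> ring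

section Orthogonal

variable {n : Type*} [Fintype n]

lemma map_ofReal_transpose_mul (Q R : Matrix n n ℝ) :
    (Q.map (↑))ᵀ * R.map ((↑) : ℝ → ℂ) = (Qᵀ * R).map (↑) :=
  (Matrix.map_mul (f := Complex.ofRealHom)).symm

lemma map_ofReal_mul_transpose (Q R : Matrix n n ℝ) :
    Q.map ((↑) : ℝ → ℂ) * (R.map (↑))ᵀ = (Q * Rᵀ).map (↑) :=
  (Matrix.map_mul (f := Complex.ofRealHom)).symm

variable [DecidableEq n]

lemma exists_mem_orthogonalGroup_map_ofReal {X : Matrix n n ℂ} (hreal : ∀ i j, (X i j).im = 0)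
    (hX : Xᴴ * X = 1) : ∃ Q ∈ Matrix.orthogonalGroup n ℝ, X = Q.map (↑) := by
  set Q := X.map re
  have hXQ : X = Q.map (↑) := by
    ext i j
    exact Complex.ext rfl (hreal i j)
  have hXt : Xᴴ = Xᵀ := by
    ext i j
    exact Complex.conj_eq_iff_im.mpr (hreal j i)
  refine ⟨Q, (Matrix.mem_orthogonalGroup_iff' _ _).mpr ?_, hXQ⟩
  apply Matrix.map_injective Complex.ofReal_injective
  beta_reduce
  rw [← map_ofReal_transpose_mul, ← hXQ, ← hXt, hX, Matrix.map_one _ Complex.ofReal_zero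
    Complex.ofReal_one]

lemma transpose_map_ofReal_mul_self {Q : Matrix n n ℝ} (hQ : Q ∈ Matrix.orthogonalGroup n ℝ) :
    (Q.map (↑))ᵀ * Q.map ((↑) : ℝ → ℂ) = 1 := by
  rw [map_ofReal_transpose_mul, (Matrix.mem_orthogonalGroup_iff' _ _).mp hQ,
    Matrix.map_one _ Complex.ofReal_zero Complex.ofReal_one]

lemma map_ofReal_mul_transpose_self {Q : Matrix n n ℝ} (hQ : Q ∈ Matrix.orthogonalGroup n ℝ) :
    Q.map ((↑) : ℝ → ℂ) * (Q.map (↑))ᵀ = 1 := by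
  rw [map_ofReal_mul_transpose, (Matrix.mem_orthogonalGroup_iff _ _).mp hQ,
    Matrix.map_one _ Complex.ofReal_zero Complex.ofReal_one]

lemma sum_sq_mul_sub_eq_zero {Q : Matrix n n ℝ} (hQ : Q ∈ Matrix.orthogonalGroup n ℝ)
    (f : n → ℝ) : ∑ l, ∑ k, Q l k ^ 2 * (f l - f k) = 0 := by
  have hrow (l : n) : ∑ k, Q l k ^ 2 = 1 := by
    simpa [Matrix.mul_apply, sq] using congr_fun₂ ((Matrix.mem_orthogonalGroup_iff _ _).mp hQ) l l
  have hcol (k : n) : ∑ l, Q l k ^ 2 = 1 := by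
    simpa [Matrix.mul_apply, sq] using congr_fun₂ ((Matrix.mem_orthogonalGroup_iff' _ _).mp hQ) k k
  simp only [mul_sub, Finset.sum_sub_distrib]
  rw [Finset.sum_comm (f := fun l k => Q l k ^ 2 * f k)]
  simp only [← Finset.sum_mul, hrow, hcol, sub_self]

end Orthogonal

lemma exists_mem_orthogonalGroup_toMagic_kron {A B : Matrix (Fin 2) (Fin 2) ℂ} (hA : SU2 A)
    (hB : SU2 B) : ∃ Q ∈ Matrix.orthogonalGroup (Fin 4) ℝ, toMagic (kron A B) = Q.map (↑) := by
  refine exists_mem_orthogonalGroup_map_ofReal (im_toMagic_kron hA hB) ?_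
  rw [conjTranspose_toMagic, ← toMagic_mul, conjTranspose_kron, kron_mul_kron, hA.1, hB.1,
    kron_one, toMagic_one]

section Trace

variable {n R : Type*} [Fintype n] [CommRing R]

lemma trace_transpose_mul_self_mul (C₁ X C₂ : Matrix n n R) :
    ((C₁ * X * C₂)ᵀ * (C₁ * X * C₂)).trace = (Xᵀ * (C₁ᵀ * C₁) * X * (C₂ * C₂ᵀ)).trace := by
  simp only [Matrix.transpose_mul, Matrix.mul_assoc]
  rw [Matrix.trace_mul_comm]
  simp only [Matrix.mul_assoc]

lemma trace_transpose_mul_diagonal_mul_mul_diagonal [DecidableEq n] (X : Matrix n n R)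
    (a b : n → R) :
    (Xᵀ * Matrix.diagonal a * X * Matrix.diagonal b).trace =
      ∑ l, ∑ k, X l k ^ 2 * (a l * b k) := by
  simp only [Matrix.trace, Matrix.diag, Matrix.mul_apply,
    Matrix.transpose_apply, Matrix.diagonal_apply, mul_ite, mul_zero, Finset.sum_ite_eq',
    Finset.mem_univ, if_true, Finset.sum_mul]
  rw [Finset.sum_comm]
  refine Finset.sum_congr rfl fun l _ => Finset.sum_congr rfl fun k _ => by ring

end Trace

/-- `tr (gᵀ g)` for `g = toMagic V`; on the canonical gate its imaginary part is `-4 B`. -/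
noncomputable def magicTrace (V : Matrix (Fin 4) (Fin 4) ℂ) : ℂ :=
  ((toMagic V)ᵀ * toMagic V).trace

lemma magicTrace_kron_mul_mul_kron {A B C D : Matrix (Fin 2) (Fin 2) ℂ} (hA : SU2 A)
    (hB : SU2 B) (hC : SU2 C) (hD : SU2 D) (V : Matrix (Fin 4) (Fin 4) ℂ) :
    magicTrace (kron A B * V * kron C D) = magicTrace V := by
  obtain ⟨Q₁, hQ₁, h₁⟩ := exists_mem_orthogonalGroup_toMagic_kron hA hB
  obtain ⟨Q₂, hQ₂, h₂⟩ := exists_mem_orthogonalGroup_toMagic_kron hC hD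
  rw [magicTrace, toMagic_mul, toMagic_mul, h₁, h₂, trace_transpose_mul_self_mul,
    transpose_map_ofReal_mul_self hQ₁, map_ofReal_mul_transpose_self hQ₂, Matrix.mul_one,
    Matrix.mul_one, magicTrace]

lemma toMagic_Lgate_generator (x y z : ℝ) :
    toMagic (I • ((x : ℂ) • kron σX σX + (y : ℂ) • kron σY σY + (z : ℂ) • kron σZ σZ)) =
      Matrix.diagonal ![((x - y + z : ℝ) : ℂ) * I, ((-x + y + z : ℝ) : ℂ) * I,
        ((x + y - z : ℝ) : ℂ) * I, ((-x - y - z : ℝ) : ℂ) * I] := by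
  rw [toMagic_eq]
  ext i j
  fin_cases i <;> fin_cases j <;>
    simp [kron, magic, σX, σY, σZ, Matrix.mul_apply, Fin.sum_univ_four] <;> grind [I_sq]

lemma toMagic_Lgate (x y z : ℝ) :
    toMagic (Lgate x y z) =
      Matrix.diagonal ![exp (((x - y + z : ℝ) : ℂ) * I), exp (((-x + y + z : ℝ) : ℂ) * I),
        exp (((x + y - z : ℝ) : ℂ) * I), exp (((-x - y - z : ℝ) : ℂ) * I)] := by
  rw [Lgate, toMagic_exp, toMagic_Lgate_generator, Matrix.exp_diagonal]
  congr 1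
  ext k
  fin_cases k <;> simp [← Complex.exp_eq_exp_ℂ]

lemma four_mul_sin_mul_sin_mul_sin (a b c : ℝ) :
    4 * Real.sin a * Real.sin b * Real.sin c =
      Real.sin (a - b + c) + Real.sin (-a + b + c) + Real.sin (a + b - c) +
        Real.sin (-a - b - c) := by
  rw [show -a + b + c = -((a - b) - c) by ring, show -a - b - c = -((a + b) + c) by ring]
  simp only [Real.sin_neg, Real.sin_add, Real.sin_sub, Real.cos_add, Real.cos_sub]
  ring

lemma im_magicTrace_Lgate (x y z : ℝ) :
    (magicTrace (Lgate x y z)).im = 4 * Real.sin (2 * x) * Real.sin (2 * y) * Real.sin (2 * z) := by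
  rw [magicTrace, toMagic_Lgate, Matrix.diagonal_transpose, Matrix.diagonal_mul_diagonal,
    Matrix.trace_diagonal, Fin.sum_univ_four, four_mul_sin_mul_sin_mul_sin]
  have him (t : ℝ) : (exp (t * I + t * I)).im = Real.sin (2 * t) := by
    rw [← Complex.exp_ofReal_mul_I_im]
    push_cast
    ring_nf
  simp only [Matrix.cons_val, ← Complex.exp_add, Complex.add_im, him]
  ring_nf

lemma det_Lgate (x y z : ℝ) : (Lgate x y z).det = 1 := by
  rw [← det_toMagic, toMagic_Lgate, Matrix.det_diagonal, Fin.prod_univ_four]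
  simp only [Matrix.cons_val, ← Complex.exp_add]
  rw [← Complex.exp_zero]
  congr 1
  push_cast
  ring

lemma det_CPHASE (φ : ℝ) : (CPHASE φ).det = exp (I * φ) := by
  simp [CPHASE, Matrix.det_diagonal, Fin.prod_univ_four]

lemma toMagic_CPHASE (φ : ℝ) :
    toMagic (CPHASE φ) =
      !![(1 + exp (I * φ)) / 2, I * (1 - exp (I * φ)) / 2, 0, 0;
        -I * (1 - exp (I * φ)) / 2, (1 + exp (I * φ)) / 2, 0, 0;
        0, 0, 1, 0;
        0, 0, 0, 1] := by
  rw [toMagic_eq]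
  ext i j
  fin_cases i <;> fin_cases j <;>
    simp [CPHASE, magic, Matrix.mul_apply, Fin.sum_univ_four] <;> grind [I_sq]

lemma transpose_toMagic_CPHASE_mul_self (φ : ℝ) :
    (toMagic (CPHASE φ))ᵀ * toMagic (CPHASE φ) =
      Matrix.diagonal ![exp (I * φ), exp (I * φ), 1, 1] := by
  rw [toMagic_CPHASE]
  ext i j
  fin_cases i <;> fin_cases j <;>
    simp [Matrix.mul_apply, Fin.sum_univ_four] <;> grind [I_sq]

lemma toMagic_CPHASE_mul_transpose_self (φ : ℝ) :
    toMagic (CPHASE φ) * (toMagic (CPHASE φ))ᵀ =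
      Matrix.diagonal ![exp (I * φ), exp (I * φ), 1, 1] := by
  rw [toMagic_CPHASE]
  ext i j
  fin_cases i <;> fin_cases j <;>
    simp [Matrix.mul_apply, Fin.sum_univ_four] <;> grind [I_sq]

lemma im_magicTrace_CPHASE_mul_kron_mul_CPHASE {A B : Matrix (Fin 2) (Fin 2) ℂ} (hA : SU2 A)
    (hB : SU2 B) {φ₁ φ₂ : ℝ} (h : exp (I * φ₁) * exp (I * φ₂) = 1) :
    (magicTrace (CPHASE φ₁ * kron A B * CPHASE φ₂)).im = 0 := by
  obtain ⟨Q, hQ, hAB⟩ := exists_mem_orthogonalGroup_toMagic_kron hA hB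
  have him₂ : (exp (I * φ₂)).im = -Real.sin φ₁ := by
    rw [eq_inv_of_mul_eq_one_right h, ← Complex.exp_neg,
      show -(I * φ₁) = ((-φ₁ : ℝ) : ℂ) * I by push_cast; ring, Complex.exp_ofReal_mul_I_im,
      Real.sin_neg]
  have him₁ : (exp (I * φ₁)).im = Real.sin φ₁ := by
    rw [mul_comm, Complex.exp_ofReal_mul_I_im]
  have hphase (l k : Fin 4) :
      ((![exp (I * φ₁), exp (I * φ₁), 1, 1] : Fin 4 → ℂ) l *
        (![exp (I * φ₂), exp (I * φ₂), 1, 1] : Fin 4 → ℂ) k).im =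
      Real.sin φ₁ * ((![1, 1, 0, 0] : Fin 4 → ℝ) l - (![1, 1, 0, 0] : Fin 4 → ℝ) k) := by
    fin_cases l <;> fin_cases k <;> simp [h, him₁, him₂]
  rw [magicTrace, toMagic_mul, toMagic_mul, hAB, trace_transpose_mul_self_mul,
    transpose_toMagic_CPHASE_mul_self, toMagic_CPHASE_mul_transpose_self,
    trace_transpose_mul_diagonal_mul_mul_diagonal]
  simp only [Complex.im_sum, Matrix.map_apply, ← Complex.ofReal_pow, Complex.im_ofReal_mul,
    hphase, mul_left_comm _ (Real.sin φ₁), ← Finset.mul_sum, sum_sq_mul_sub_eq_zero hQ, mul_zero]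

lemma eq_zero_of_sin_two_mul_eq_zero {t : ℝ} (ht : |t| ≤ Real.pi / 4)
    (h : Real.sin (2 * t) = 0) : t = 0 := by
  rw [abs_le] at ht
  have := (Real.sin_eq_zero_iff_of_lt_of_lt (by linarith [Real.pi_pos])
    (by linarith [Real.pi_pos])).mp h
  linarith

lemma eq_zero_of_sin_mul_sin_mul_sin_eq_zero {x y z : ℝ} (hx : x ≤ Real.pi / 4) (hxy : y ≤ x)
    (hyz : |z| ≤ y) (h : Real.sin (2 * x) * Real.sin (2 * y) * Real.sin (2 * z) = 0) : z = 0 := by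
  have hy : 0 ≤ y := (abs_nonneg z).trans hyz
  have habs (t : ℝ) (ht₀ : 0 ≤ t) (ht : t ≤ x) : |t| ≤ Real.pi / 4 := by
    rw [abs_of_nonneg ht₀]; linarith
  rcases mul_eq_zero.mp h with h | hz
  · suffices y = 0 by
      subst this
      exact abs_nonpos_iff.mp hyz
    rcases mul_eq_zero.mp h with hx' | hy'
    · have := eq_zero_of_sin_two_mul_eq_zero (habs x (hy.trans hxy) le_rfl) hx'
      linarith
    · exact eq_zero_of_sin_two_mul_eq_zero (habs y hy hxy) hy'
  · exact eq_zero_of_sin_two_mul_eq_zero (hyz.trans (hxy.trans hx)) hz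

/-- If U₁ and U₂ are CPHASE gates up to local equivalence, then for any single-qubit
gates A₁, A₂, the gate V = U₁ (A₁⊗A₂) U₂ has Weyl chamber coordinate z' = 0. -/
theorem two_cphase_gates_span_plane
    (U₁ U₂ : Matrix (Fin 4) (Fin 4) ℂ) (φ₁ φ₂ : ℝ)
    (P₁ P₂ Q₁ Q₂ R₁ R₂ S₁ S₂ : Matrix (Fin 2) (Fin 2) ℂ)
    (hP₁ : SU2 P₁) (hP₂ : SU2 P₂) (hQ₁ : SU2 Q₁) (hQ₂ : SU2 Q₂)
    (hR₁ : SU2 R₁) (hR₂ : SU2 R₂) (hS₁ : SU2 S₁) (hS₂ : SU2 S₂)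
    (hU₁ : U₁ = kron P₁ P₂ * CPHASE φ₁ * kron Q₁ Q₂)
    (hU₂ : U₂ = kron R₁ R₂ * CPHASE φ₂ * kron S₁ S₂)
    (A₁ A₂ : Matrix (Fin 2) (Fin 2) ℂ) (hA₁ : SU2 A₁) (hA₂ : SU2 A₂)
    (V : Matrix (Fin 4) (Fin 4) ℂ) (hV : V = U₁ * kron A₁ A₂ * U₂)
    (x' y' z' : ℝ)
    (hx : x' ≤ Real.pi / 4) (hxy : y' ≤ x') (hyz : |z'| ≤ y')
    (hloc : ∃ E₁ E₂ F₁ F₂ : Matrix (Fin 2) (Fin 2) ℂ,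
      SU2 E₁ ∧ SU2 E₂ ∧ SU2 F₁ ∧ SU2 F₂ ∧
      V = kron E₁ E₂ * Lgate x' y' z' * kron F₁ F₂) :
    z' = 0 := by
  obtain ⟨E₁, E₂, F₁, F₂, hE₁, hE₂, hF₁, hF₂, hVL⟩ := hloc
  have hB₁ : SU2 (Q₁ * A₁ * R₁) := (hQ₁.mul hA₁).mul hR₁
  have hB₂ : SU2 (Q₂ * A₂ * R₂) := (hQ₂.mul hA₂).mul hR₂
  have hLC : kron E₁ E₂ * Lgate x' y' z' * kron F₁ F₂ =
      kron P₁ P₂ * (CPHASE φ₁ * kron (Q₁ * A₁ * R₁) (Q₂ * A₂ * R₂) * CPHASE φ₂) * kron S₁ S₂ := by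
    rw [← hVL, hV, hU₁, hU₂, ← kron_mul_kron, ← kron_mul_kron]
    simp only [Matrix.mul_assoc]
  have hphase : exp (I * φ₁) * exp (I * φ₂) = 1 := by
    simpa [Matrix.det_mul, det_Lgate, det_CPHASE, hE₁.det_kron hE₂, hF₁.det_kron hF₂,
      hP₁.det_kron hP₂, hB₁.det_kron hB₂, hS₁.det_kron hS₂] using (congr_arg Matrix.det hLC).symm
  have him := congr_arg (fun W => (magicTrace W).im) hLC
  simp only [magicTrace_kron_mul_mul_kron hE₁ hE₂ hF₁ hF₂,
    magicTrace_kron_mul_mul_kron hP₁ hP₂ hS₁ hS₂, im_magicTrace_Lgate,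
    im_magicTrace_CPHASE_mul_kron_mul_CPHASE hB₁ hB₂ hphase] at him
  exact eq_zero_of_sin_mul_sin_mul_sin_eq_zero hx hxy hyz (by linarith)
end
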